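/- Let (θ, ω) be a solution of the inertial frustrated Kuramoto model on a symmetric connected network, with sufficient differentiability (ω_i', ω_i'' exist). Let D^∞ > 0 and δ satisfy α < δ and D^∞ + δ < π/2, and let c satisfy c·cos(D^∞ + δ) > 2. Let I be an open interval of times on which D_θ(t) ≤ D^∞, and let τ be a permutation of {1,…,N} such that ω_{τ(1)}(t) ≤ … ≤ ω_{τ(N)}(t) for all t ∈ I; define F(t) = (Σ_{i=1}^N c^{i−1}·ω_{τ(i)}(t) − Σ_{i=1}^N c^{N−i}·ω_{τ(i)}(t))/S_c. Then for every t ∈ I: m·F''(t) + F'(t) ≤ −(2K·ψ_l/(N·S_c))·F(t). -/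

import Mathlib

/-!
Differentiating the equation gives `m ω_i'' + ω_i' = (K/N) Σ_j ψ_ij cos(θ_j - θ_i + α) (ω_j - ω_i)`,
so `S_c (m F'' + F')` is the sum of these couplings against the skew weights
`c^i - c^(N-1-i)` of the frequency order. Pairing the terms `(i, j)` and `(j, i)` for `i < j`,
the phase bound puts every cosine in `[cos (D^∞ + δ), 1]`, and `c cos (D^∞ + δ) > 2` makes the
combined coefficient at most `-2`; hence `S_c (m F'' + F') ≤ -(2K/N) Σ_{i<j} ψ_ij (ω_j - ω_i)`.
By connectivity every gap between consecutive ordered frequencies is spanned by an edge of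
weight at least `ψ_l`, so this sum is at least `ψ_l (ω_max - ω_min)`; and
`S_c F ≤ S_c (ω_max - ω_min)` because the skew weights sum to zero.
-/

open Real Finset

/-- Diameter: max minus min of a finite family of reals. -/
noncomputable def diam {N : ℕ} (v : Fin N → ℝ) : ℝ := (⨆ i, v i) - (⨅ i, v i)

/-- `S_c = Σ_{n=0}^{N-1} c^n`. -/
noncomputable def Sc (N : ℕ) (c : ℝ) : ℝ := ∑ n ∈ Finset.range N, c ^ n

/-- `Y_c(z)`: difference of the two convex-type combinations of the nondecreasing
rearrangement of `z` (weights `c^{i-1}` and `c^{N-i}`), divided by `S_c`. -/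
noncomputable def Yc {N : ℕ} (c : ℝ) (z : Fin N → ℝ) : ℝ :=
  (∑ i : Fin N, c ^ (i : ℕ) * z (Tuple.sort z i) -
   ∑ i : Fin N, c ^ (N - 1 - (i : ℕ)) * z (Tuple.sort z i)) / Sc N c

/-- The interaction graph: `i` and `j` adjacent iff `i ≠ j` and the (symmetric) weight
`ψ i j` is positive. -/
def netGraph {N : ℕ} (ψ : Fin N → Fin N → ℝ) : SimpleGraph (Fin N) where
  Adj i j := i ≠ j ∧ 0 < ψ i j ∧ 0 < ψ j i
  symm := ⟨fun _ _ h => ⟨h.1.symm, h.2.2, h.2.1⟩⟩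
  loopless := ⟨fun _ h => h.1 rfl⟩

/-- Difference of the two convex combinations, along a fixed permutation, of a family of
time-dependent quantities. -/
noncomputable def comb {N : ℕ} (c : ℝ) (σ : Equiv.Perm (Fin N)) (g : Fin N → ℝ → ℝ) :
    ℝ → ℝ :=
  fun t => (∑ i : Fin N, c ^ (i : ℕ) * g (σ i) t
    - ∑ i : Fin N, c ^ (N - 1 - (i : ℕ)) * g (σ i) t) / Sc N c

lemma sum_sum_le_of_add_swap_le {ι M : Type*} [Fintype ι] [LinearOrder ι] [AddCommGroup M]
    [LinearOrder M] [IsOrderedAddMonoid M] {f g : ι → ι → M}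
    (hlt : ∀ i j, i < j → f i j + f j i ≤ g i j + g j i) (hdiag : ∀ i, f i i ≤ g i i) :
    ∑ i, ∑ j, f i j ≤ ∑ i, ∑ j, g i j := by
  have hsymm (h : ι → ι → M) : 2 • ∑ i, ∑ j, h i j = ∑ i, ∑ j, (h i j + h j i) := by
    rw [two_nsmul]
    nth_rewrite 2 [sum_comm]
    simp only [← sum_add_distrib]
  have hpair (i j : ι) : f i j + f j i ≤ g i j + g j i := by
    rcases lt_trichotomy i j with h | rfl | h
    · exact hlt i j h
    · exact add_le_add (hdiag i) (hdiag i)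
    · simpa only [add_comm] using hlt j i h
  refine le_of_nsmul_le_nsmul_right two_ne_zero ?_
  rw [hsymm, hsymm]
  exact sum_le_sum fun i _ => sum_le_sum fun j _ => hpair i j

lemma Monotone.exists_nat_extension {α : Type*} [Preorder α] {N : ℕ} (hN : 0 < N)
    {v : Fin N → α} (hv : Monotone v) : ∃ W : ℕ → α, Monotone W ∧ ∀ i : Fin N, W i = v i := by
  obtain ⟨M, rfl⟩ := Nat.exists_eq_succ_of_ne_zero hN.ne'
  refine ⟨fun n => v (Fin.clamp n M), fun a b hab => hv ?_, fun i => congrArg v ?_⟩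
  · simp only [Fin.le_def, Fin.coe_clamp]; omega
  · ext; simp only [Fin.coe_clamp]; omega

lemma ite_lt_mul_sub_eq_sum_range (W : ℕ → ℝ) (a : ℝ) {i j n : ℕ} (hj : j ≤ n) :
    (if i < j then a * (W j - W i) else 0) =
      ∑ k ∈ range n, if i ≤ k ∧ k < j then a * (W (k + 1) - W k) else 0 := by
  rw [← sum_filter, ← mul_sum]
  have : (range n).filter (fun k => i ≤ k ∧ k < j) = Ico i j := by
    ext k; simp only [mem_filter, mem_range, mem_Ico]; omega
  split_ifs with hij
  · rw [this, sum_Ico_sub W hij.le]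
  · rw [this, Ico_eq_empty_of_le (not_lt.1 hij), sum_empty, mul_zero]

lemma SimpleGraph.Connected.exists_adj_of_lt {V : Type*} {G : SimpleGraph V} (hG : G.Connected)
    {N : ℕ} (e : Fin N ≃ V) {k : ℕ} (hk : k + 1 < N) :
    ∃ i j : Fin N, (i : ℕ) ≤ k ∧ k < j ∧ G.Adj (e i) (e j) := by
  let S : Set V := {v | (e.symm v : ℕ) ≤ k}
  obtain ⟨p⟩ := hG.preconnected (e ⟨0, by omega⟩) (e ⟨N - 1, by omega⟩)
  obtain ⟨d, -, hd₁, hd₂⟩ := p.exists_boundary_dart S (by simp [S])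
    (by simp only [S, Set.mem_ofPred_eq, e.symm_apply_apply]; omega)
  exact ⟨e.symm d.fst, e.symm d.snd, hd₁, not_le.1 hd₂, by simp [d.adj]⟩

lemma mul_sub_le_sum_ite_lt_mul_sub {N : ℕ} {ψl : ℝ} {W : ℕ → ℝ} (hW : Monotone W)
    {Ψ : Fin N → Fin N → ℝ} (hΨ : ∀ i j, 0 ≤ Ψ i j)
    (hcut : ∀ k : ℕ, k + 1 < N → ∃ i j : Fin N, (i : ℕ) ≤ k ∧ k < j ∧ ψl ≤ Ψ i j) :
    ψl * (W (N - 1) - W 0) ≤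
      ∑ i : Fin N, ∑ j : Fin N, if (i : ℕ) < j then Ψ i j * (W j - W i) else 0 := by
  have htel (i j : Fin N) :=
    ite_lt_mul_sub_eq_sum_range W (Ψ i j) (i := i) (Nat.le_sub_one_of_lt j.isLt)
  simp only [htel]
  rw [sum_congr rfl fun i _ => sum_comm, sum_comm, ← sum_range_sub, mul_sum]
  refine sum_le_sum fun k hk => ?_
  obtain ⟨i, j, hi, hj, hΨij⟩ := hcut k (by have := mem_range.1 hk; omega)
  have hnn (i j : Fin N) : 0 ≤ if (i : ℕ) ≤ k ∧ k < j then Ψ i j * (W (k + 1) - W k) else 0 := by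
    split_ifs
    · exact mul_nonneg (hΨ i j) (sub_nonneg.2 (hW k.le_succ))
    · exact le_rfl
  calc ψl * (W (k + 1) - W k) ≤ Ψ i j * (W (k + 1) - W k) :=
        mul_le_mul_of_nonneg_right hΨij (sub_nonneg.2 (hW k.le_succ))
    _ = if (i : ℕ) ≤ k ∧ k < j then Ψ i j * (W (k + 1) - W k) else 0 := (if_pos ⟨hi, hj⟩).symm
    _ ≤ ∑ j' : Fin N, if (i : ℕ) ≤ k ∧ k < j' then Ψ i j' * (W (k + 1) - W k) else 0 :=
        single_le_sum (fun j' _ => hnn i j') (mem_univ j)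
    _ ≤ _ := single_le_sum (fun i' _ => sum_nonneg fun j' _ => hnn i' j') (mem_univ i)

noncomputable def skewWeight (N : ℕ) (c : ℝ) (n : ℕ) : ℝ := c ^ n - c ^ (N - 1 - n)

lemma sum_range_skewWeight (N : ℕ) (c : ℝ) : ∑ n ∈ range N, skewWeight N c n = 0 := by
  simp only [skewWeight, sum_sub_distrib, sum_range_reflect (c ^ ·) N, sub_self]

lemma Sc_pos {N : ℕ} (hN : 0 < N) {c : ℝ} (hc : 0 < c) : 0 < Sc N c :=
  sum_pos (fun n _ => pow_pos hc n) (nonempty_range_iff.2 hN.ne')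

lemma sum_range_skewWeight_mul_le {N : ℕ} {c : ℝ} (hc : 0 ≤ c) {W : ℕ → ℝ} (hW : Monotone W) :
    ∑ n ∈ range N, skewWeight N c n * W n ≤ Sc N c * (W (N - 1) - W 0) := by
  calc ∑ n ∈ range N, skewWeight N c n * W n
      = ∑ n ∈ range N, skewWeight N c n * (W n - W 0) := by
        simp only [mul_sub, sum_sub_distrib, ← sum_mul, sum_range_skewWeight, zero_mul, sub_zero]
    _ ≤ ∑ n ∈ range N, c ^ n * (W n - W 0) := sum_le_sum fun n _ => by
        rw [skewWeight, sub_mul]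
        have := mul_nonneg (pow_nonneg hc (N - 1 - n)) (sub_nonneg.2 (hW n.zero_le))
        linarith
    _ ≤ ∑ n ∈ range N, c ^ n * (W (N - 1) - W 0) := sum_le_sum fun n hn => by
        have : n ≤ N - 1 := by have := mem_range.1 hn; omega
        gcongr
        exact hW this
    _ = Sc N c * (W (N - 1) - W 0) := by rw [Sc, sum_mul]

lemma pow_mul_sub_pow_mul_le_neg_one {c γ A B : ℝ} {p q : ℕ} (hpq : p < q) (hc : 1 ≤ c)
    (hcγ : 2 ≤ c * γ) (hA : A ≤ 1) (hB : γ ≤ B) : c ^ p * A - c ^ q * B ≤ -1 := by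
  have hq : c ^ q = c * c ^ (q - 1) := by rw [← pow_succ']; congr 1; omega
  have h₁ : c ^ p * A ≤ c ^ (q - 1) :=
    (mul_le_of_le_one_right (by positivity) hA).trans (pow_le_pow_right₀ hc (by omega))
  have h₂ : 2 * c ^ (q - 1) ≤ c ^ q * B := by
    rw [hq, mul_right_comm]
    calc 2 * c ^ (q - 1) ≤ c * γ * c ^ (q - 1) := by gcongr
      _ ≤ c * B * c ^ (q - 1) := by gcongr
  linarith [one_le_pow₀ hc (n := q - 1)]

lemma skewWeight_mul_sub_skewWeight_mul_le {N i j : ℕ} (hij : i < j) (hj : j < N) {c γ A B : ℝ}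
    (hc : 1 ≤ c) (hcγ : 2 ≤ c * γ) (hγA : γ ≤ A) (hA : A ≤ 1) (hγB : γ ≤ B) (hB : B ≤ 1) :
    skewWeight N c i * A - skewWeight N c j * B ≤ -2 := by
  have h₁ := pow_mul_sub_pow_mul_le_neg_one hij hc hcγ hA hγB
  have h₂ := pow_mul_sub_pow_mul_le_neg_one (p := N - 1 - j) (q := N - 1 - i) (by omega)
    hc hcγ hB hγA
  simp only [skewWeight]
  linarith

theorem sum_skewWeight_mul_coupling_le {N : ℕ} (hN : 0 < N) {c γ ψl : ℝ} (hc : 1 ≤ c)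
    (hcγ : 2 ≤ c * γ) (hψl : 0 ≤ ψl) {w : Fin N → ℝ} (hw : Monotone w) {Ψ C : Fin N → Fin N → ℝ}
    (hΨsymm : ∀ i j, Ψ i j = Ψ j i) (hΨ : ∀ i j, 0 ≤ Ψ i j)
    (hγC : ∀ i j, γ ≤ C i j) (hC : ∀ i j, C i j ≤ 1)
    (hcut : ∀ k : ℕ, k + 1 < N → ∃ i j : Fin N, (i : ℕ) ≤ k ∧ k < j ∧ ψl ≤ Ψ i j) :
    ∑ i : Fin N, skewWeight N c i * ∑ j : Fin N, Ψ i j * (C i j * (w j - w i)) ≤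
      -(2 * ψl / Sc N c) * ∑ i : Fin N, skewWeight N c i * w i := by
  obtain ⟨W, hW, hWw⟩ := hw.exists_nat_extension hN
  simp only [← hWw]
  have hpaired : ∑ i : Fin N, skewWeight N c i * ∑ j : Fin N, Ψ i j * (C i j * (W j - W i)) ≤
      -2 * ∑ i : Fin N, ∑ j : Fin N, if (i : ℕ) < j then Ψ i j * (W j - W i) else 0 := by
    simp only [mul_sum]
    refine sum_sum_le_of_add_swap_le (fun i j hij => ?_) (fun i => by simp)
    have hcoef := skewWeight_mul_sub_skewWeight_mul_le hij j.isLt hc hcγ (hγC i j) (hC i j)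
      (hγC j i) (hC j i)
    have hd := mul_nonneg (hΨ i j) (sub_nonneg.2 (hW (Fin.le_def.1 hij.le)))
    rw [if_pos (show (i : ℕ) < j from hij), if_neg (by omega), hΨsymm j i]
    nlinarith
  have hweight := sum_range_skewWeight_mul_le (N := N) (c := c) (by linarith) hW
  rw [← Fin.sum_univ_eq_sum_range] at hweight
  have hS := Sc_pos hN (by linarith : (0 : ℝ) < c)
  have hscaled : 2 * ψl / Sc N c * ∑ i : Fin N, skewWeight N c i * W i ≤
      2 * (ψl * (W (N - 1) - W 0)) :=
    calc _ ≤ 2 * ψl / Sc N c * (Sc N c * (W (N - 1) - W 0)) := by gcongr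
      _ = 2 * (ψl * (W (N - 1) - W 0)) := by field_simp
  linarith [mul_sub_le_sum_ite_lt_mul_sub hW hΨ hcut]

lemma sub_le_diam {N : ℕ} (v : Fin N → ℝ) (i j : Fin N) : v i - v j ≤ diam v :=
  sub_le_sub (le_ciSup (Set.finite_range v).bddAbove i) (ciInf_le (Set.finite_range v).bddBelow j)

lemma abs_sub_le_diam {N : ℕ} (v : Fin N → ℝ) (i j : Fin N) : |v i - v j| ≤ diam v :=
  abs_sub_le_iff.2 ⟨sub_le_diam v i j, sub_le_diam v j i⟩

lemma cos_le_cos_add_of_abs_le {x α D δ : ℝ} (hx : |x| ≤ D) (hα : 0 ≤ α) (hαδ : α ≤ δ)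
    (hDδ : D + δ ≤ π) : cos (D + δ) ≤ cos (x + α) := by
  rw [← cos_abs (x + α)]
  refine cos_le_cos_of_nonneg_of_le_pi (abs_nonneg _) hDδ (abs_le.2 ⟨?_, ?_⟩) <;>
    linarith [abs_le.1 hx]

lemma comb_eq_sum_skewWeight {N : ℕ} (c : ℝ) (σ : Equiv.Perm (Fin N)) (g : Fin N → ℝ → ℝ)
    (t : ℝ) : comb c σ g t = (∑ i : Fin N, skewWeight N c i * g (σ i) t) / Sc N c := by
  simp only [comb, skewWeight, sub_mul, sum_sub_distrib]

lemma mul_comb_add_comb {N : ℕ} (c a : ℝ) (σ : Equiv.Perm (Fin N)) (g h : Fin N → ℝ → ℝ)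
    (t : ℝ) : a * comb c σ g t + comb c σ h t = comb c σ (fun i s => a * g i s + h i s) t := by
  simp only [comb_eq_sum_skewWeight, mul_add, sum_add_distrib, mul_left_comm _ a, ← mul_sum]
  ring

lemma hasDerivAt_comb {N : ℕ} (c : ℝ) (σ : Equiv.Perm (Fin N)) {g g' : Fin N → ℝ → ℝ} {t : ℝ}
    (hg : ∀ i, HasDerivAt (g i) (g' i t) t) : HasDerivAt (comb c σ g) (comb c σ g' t) t := by
  rw [funext (comb_eq_sum_skewWeight c σ g), comb_eq_sum_skewWeight]
  exact (HasDerivAt.fun_sum fun i _ => (hg (σ i)).const_mul _).div_const _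

lemma deriv_comb {N : ℕ} (c : ℝ) (σ : Equiv.Perm (Fin N)) {g : Fin N → ℝ → ℝ}
    (hg : ∀ i, Differentiable ℝ (g i)) : deriv (comb c σ g) = comb c σ (fun i => deriv (g i)) :=
  funext fun t => (hasDerivAt_comb c σ fun i => (hg i t).hasDerivAt).deriv

lemma deriv_inertial_eq {N : ℕ} {m K α : ℝ} {Ω : Fin N → ℝ} {ψ : Fin N → Fin N → ℝ}
    {θ : Fin N → ℝ → ℝ} (hθ : ∀ i, ContDiff ℝ 3 (θ i))
    (hode : ∀ i, ∀ t : ℝ, 0 ≤ t → m * deriv (deriv (θ i)) t + deriv (θ i) t =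
      Ω i + (K / N) * ∑ j : Fin N, ψ i j * sin (θ j t - θ i t + α))
    {t : ℝ} (ht : 0 < t) (i : Fin N) :
    m * deriv (deriv (deriv (θ i))) t + deriv (deriv (θ i)) t =
      (K / N) * ∑ j : Fin N,
        ψ i j * (cos (θ j t - θ i t + α) * (deriv (θ j) t - deriv (θ i) t)) := by
  have hθ' (j : Fin N) : Differentiable ℝ (θ j) := (hθ j).differentiable (by norm_num)
  have hω (j : Fin N) : Differentiable ℝ (deriv (θ j)) :=
    ((hθ j).iterate_deriv' 2 1).differentiable (by norm_num)
  have hω' : Differentiable ℝ (deriv (deriv (θ i))) :=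
    ((hθ i).iterate_deriv' 1 2).differentiable (by norm_num)
  have hL : HasDerivAt (fun s => m * deriv (deriv (θ i)) s + deriv (θ i) s)
      (m * deriv (deriv (deriv (θ i))) t + deriv (deriv (θ i)) t) t :=
    ((hω' t).hasDerivAt.const_mul m).add (hω i t).hasDerivAt
  have hR : HasDerivAt (fun s => Ω i + (K / N) * ∑ j : Fin N, ψ i j * sin (θ j s - θ i s + α))
      ((K / N) * ∑ j : Fin N, ψ i j * (cos (θ j t - θ i t + α) * (deriv (θ j) t - deriv (θ i) t)))
      t :=
    ((HasDerivAt.fun_sum fun j _ => ((((hθ' j t).hasDerivAt.sub (hθ' i t).hasDerivAt).add_const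
      α).sin).const_mul (ψ i j)).const_mul _).const_add _
  have hode_near : (fun s => m * deriv (deriv (θ i)) s + deriv (θ i) s) =ᶠ[nhds t]
      fun s => Ω i + (K / N) * ∑ j : Fin N, ψ i j * sin (θ j s - θ i s + α) :=
    Filter.eventually_of_mem (Ioi_mem_nhds ht) fun s hs => hode i s (le_of_lt hs)
  rw [← hL.deriv, ← hR.deriv, hode_near.deriv_eq]

theorem stmt14_general {N : ℕ} (hN : 2 ≤ N) (m K α : ℝ) (hK : 0 < K)
    (hα0 : 0 < α)
    (Ω : Fin N → ℝ) (ψ : Fin N → Fin N → ℝ)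
    (hψsym : ∀ i j, ψ i j = ψ j i) (hψnn : ∀ i j, 0 ≤ ψ i j)
    (hconn : (netGraph ψ).Connected)
    (ψl : ℝ)
    (hψl : IsLeast {x | ∃ i j, (netGraph ψ).Adj i j ∧ ψ i j = x} ψl)
    (θ : Fin N → ℝ → ℝ) (hsmooth : ∀ i, ContDiff ℝ 3 (θ i))
    (hode : ∀ i, ∀ t : ℝ, 0 ≤ t →
      m * deriv (deriv (θ i)) t + deriv (θ i) t =
        Ω i + (K / N) * ∑ j : Fin N, ψ i j * Real.sin (θ j t - θ i t + α))
    (Dinf δ c : ℝ) (hD : 0 < Dinf) (hαδ : α < δ) (hDδ : Dinf + δ < π / 2)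
    (hcc : 2 < c * Real.cos (Dinf + δ))
    (t1 t2 : ℝ) (ht1 : 0 ≤ t1)
    (hdiam : ∀ t ∈ Set.Ioo t1 t2, diam (fun i => θ i t) ≤ Dinf)
    (τ : Equiv.Perm (Fin N))
    (hord : ∀ t ∈ Set.Ioo t1 t2, Monotone fun i => deriv (θ (τ i)) t) :
    ∀ t ∈ Set.Ioo t1 t2,
      m * deriv (deriv (comb c τ (fun i => deriv (θ i)))) t
          + deriv (comb c τ (fun i => deriv (θ i))) t ≤
        - (2 * K * ψl / (N * Sc N c)) * comb c τ (fun i => deriv (θ i)) t := by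
  intro t ht
  have hγ : 0 < cos (Dinf + δ) := cos_pos_of_mem_Ioo ⟨by linarith [pi_pos], hDδ⟩
  have hc : 1 ≤ c := by nlinarith [cos_le_one (Dinf + δ)]
  have hψl0 : 0 ≤ ψl := by obtain ⟨a, b, hab, rfl⟩ := hψl.1; exact hab.2.1.le
  have hcut (k : ℕ) (hk : k + 1 < N) :
      ∃ i j : Fin N, (i : ℕ) ≤ k ∧ k < j ∧ ψl ≤ ψ (τ i) (τ j) := by
    obtain ⟨i, j, hi, hj, hadj⟩ := hconn.exists_adj_of_lt τ hk
    exact ⟨i, j, hi, hj, hψl.2 ⟨_, _, hadj, rfl⟩⟩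
  have hγC (i j : Fin N) : cos (Dinf + δ) ≤ cos (θ (τ j) t - θ (τ i) t + α) :=
    cos_le_cos_add_of_abs_le ((abs_sub_le_diam (fun i => θ i t) _ _).trans (hdiam t ht))
      hα0.le hαδ.le (by linarith [pi_pos])
  have hcore := sum_skewWeight_mul_coupling_le (by omega) hc hcc.le hψl0 (hord t ht)
    (fun i j => hψsym _ _) (fun i j => hψnn _ _) hγC (fun i j => cos_le_one _) hcut
  have hS := Sc_pos (N := N) (by omega) (by linarith : (0 : ℝ) < c)
  have hω (i : Fin N) : Differentiable ℝ (deriv (θ i)) :=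
    ((hsmooth i).iterate_deriv' 2 1).differentiable (by norm_num)
  have hω' (i : Fin N) : Differentiable ℝ (deriv (deriv (θ i))) :=
    ((hsmooth i).iterate_deriv' 1 2).differentiable (by norm_num)
  rw [deriv_comb c τ hω, deriv_comb c τ hω', mul_comb_add_comb, comb_eq_sum_skewWeight,
    comb_eq_sum_skewWeight]
  simp only [deriv_inertial_eq hsmooth hode (ht1.trans_lt ht.1),
    ← Equiv.sum_comp τ (fun j => ψ (τ _) j * _)]
  simp only [mul_left_comm _ (K / N), ← mul_sum]
  have hKN : 0 ≤ K / N := by positivity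
  refine (div_le_div_of_nonneg_right (mul_le_mul_of_nonneg_left hcore hKN) hS.le).trans_eq ?_
  field_simp

/-- second-order dissipative differential inequality for the frequency
combination `F` once the phase diameter is at most `D^∞`. -/
theorem stmt14 {N : ℕ} (hN : 2 ≤ N) (m K α : ℝ) (hm : 0 < m) (hK : 0 < K)
    (hα0 : 0 < α) (hα : α < π / 2)
    (Ω : Fin N → ℝ) (ψ : Fin N → Fin N → ℝ)
    (hψsym : ∀ i j, ψ i j = ψ j i) (hψnn : ∀ i j, 0 ≤ ψ i j)
    (hconn : (netGraph ψ).Connected)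
    (ψu ψl : ℝ)
    (hψu : IsGreatest {x | ∃ i j, (netGraph ψ).Adj i j ∧ ψ i j = x} ψu)
    (hψl : IsLeast {x | ∃ i j, (netGraph ψ).Adj i j ∧ ψ i j = x} ψl)
    (θ : Fin N → ℝ → ℝ) (hsmooth : ∀ i, ContDiff ℝ 3 (θ i))
    (hode : ∀ i, ∀ t : ℝ, 0 ≤ t →
      m * deriv (deriv (θ i)) t + deriv (θ i) t =
        Ω i + (K / N) * ∑ j : Fin N, ψ i j * Real.sin (θ j t - θ i t + α))
    (Dinf δ c : ℝ) (hD : 0 < Dinf) (hαδ : α < δ) (hDδ : Dinf + δ < π / 2)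
    (hcc : 2 < c * Real.cos (Dinf + δ))
    (t1 t2 : ℝ) (ht1 : 0 ≤ t1)
    (hdiam : ∀ t ∈ Set.Ioo t1 t2, diam (fun i => θ i t) ≤ Dinf)
    (τ : Equiv.Perm (Fin N))
    (hord : ∀ t ∈ Set.Ioo t1 t2, Monotone fun i => deriv (θ (τ i)) t) :
    ∀ t ∈ Set.Ioo t1 t2,
      m * deriv (deriv (comb c τ (fun i => deriv (θ i)))) t
          + deriv (comb c τ (fun i => deriv (θ i))) t ≤
        - (2 * K * ψl / (N * Sc N c)) * comb c τ (fun i => deriv (θ i)) t :=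
  stmt14_general hN m K α hK hα0 Ω ψ hψsym hψnn hconn ψl hψl θ hsmooth hode Dinf δ c hD hαδ hDδ hcc
    t1 t2 ht1 hdiam τ hord
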